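/- arXiv:2006.13770 — 5 statements merged into one kernel-verified Lean document; each statement's English description precedes it below -/
import Mathlib

section
/- Let b, c, m, μ, λ be positive real numbers with 0 < mλ − b < bμ/c. Define A = λ(2cm² + b) − mb(μ + 2c), Δ₁ = A² + 4(b + cm²)[b(μ + c) − mcλ](mλ − b), u* = (A + √Δ₁)/(2(b + cm²)) and v* = u*(λ − u*)/(b − m(λ − u*)). Then u* > 0, b − m(λ − u*) > 0, v* > 0, and the pair (u*, v*) satisfies the system λ − u* − b v*/(u* + m v*) = 0 and μ − v* + c u*/(u* + m v*) = 0. -/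
/-!
The equilibrium equations reduce to one quadratic `p(u) = 0` for the prey density, with
`v = u (λ - u) / (b - m (λ - u))`; `u*` is its larger root. Written as
`p(u) = μ b w + c w² - b u (λ - u)` with `w = b - m (λ - u)`, the quadratic is negative at `u = 0`
and at `u = λ - b / m` (where `w = 0`) and positive at `u = λ` (where `w = b`). Hence
`max 0 (λ - b / m) < u* < λ`, which gives the positivity of `u*`, `w` and `v*`.
-/

section LargerRoot

variable {q A C s x t : ℝ}

theorem larger_root_isRoot (hq : q ≠ 0) (hs : s ^ 2 = A ^ 2 + 4 * q * C)
    (hx : 2 * q * x = A + s) : q * x ^ 2 - A * x - C = 0 := by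
  have h4q : 4 * q ≠ 0 := by positivity
  refine (mul_eq_zero.mp ?_).resolve_left h4q
  linear_combination (2 * q * x - A + s) * hx + hs

theorem lt_larger_root (hq : 0 < q) (hs₀ : 0 ≤ s) (hs : s ^ 2 = A ^ 2 + 4 * q * C)
    (hx : 2 * q * x = A + s) (ht : q * t ^ 2 - A * t - C < 0) : t < x := by
  have hsq : (2 * q * t - A) ^ 2 < s ^ 2 := by nlinarith
  have : 2 * q * t - A < s := (abs_lt.mp (abs_lt_of_sq_lt_sq hsq hs₀)).2
  nlinarith

theorem larger_root_lt (hq : 0 < q) (hs : s ^ 2 = A ^ 2 + 4 * q * C)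
    (hx : 2 * q * x = A + s) (ht : 0 < q * t ^ 2 - A * t - C) (hAt : A < 2 * q * t) :
    x < t := by
  have hsq : s ^ 2 < (2 * q * t - A) ^ 2 := by nlinarith
  have : s < 2 * q * t - A := lt_of_pow_lt_pow_left₀ 2 (by linarith) hsq
  nlinarith

end LargerRoot

section Equilibrium

variable {b c m μ lam u v : ℝ}

theorem equilibrium_quadratic_eq {A : ℝ} (hA : A = lam * (2 * c * m ^ 2 + b) - m * b * (μ + 2 * c))
    (u : ℝ) :
    (b + c * m ^ 2) * u ^ 2 - A * u - (b * (μ + c) - m * c * lam) * (m * lam - b) =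
      μ * b * (b - m * (lam - u)) + c * (b - m * (lam - u)) ^ 2 - b * u * (lam - u) := by
  subst hA; ring

theorem add_mul_eq_of_eq_div (hw : b - m * (lam - u) ≠ 0)
    (hv : v = u * (lam - u) / (b - m * (lam - u))) :
    u + m * v = u * b / (b - m * (lam - u)) := by
  subst hv; field_simp; ring

theorem prey_eq_zero (hb : b ≠ 0) (hu : u ≠ 0) (hw : b - m * (lam - u) ≠ 0)
    (hv : v = u * (lam - u) / (b - m * (lam - u))) :
    lam - u - b * v / (u + m * v) = 0 := by
  rw [add_mul_eq_of_eq_div hw hv, hv]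
  generalize b - m * (lam - u) = w at hw ⊢
  field_simp
  ring

theorem predator_eq_zero (hb : b ≠ 0) (hu : u ≠ 0) (hw : b - m * (lam - u) ≠ 0)
    (hv : v = u * (lam - u) / (b - m * (lam - u)))
    (hp : μ * b * (b - m * (lam - u)) + c * (b - m * (lam - u)) ^ 2 - b * u * (lam - u) = 0) :
    μ - v + c * u / (u + m * v) = 0 := by
  rw [add_mul_eq_of_eq_div hw hv, hv]
  generalize b - m * (lam - u) = w at hw hp ⊢
  field_simp
  linear_combination hp

end Equilibrium

/-- the positive constant equilibrium of the ratio-dependent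
predator-prey reaction terms. -/
theorem stmt_0 (b c m μ lam A Δ₁ ustar vstar : ℝ)
    (hb : 0 < b) (hc : 0 < c) (hm : 0 < m) (hμ : 0 < μ) (hlam : 0 < lam)
    (h1 : 0 < m * lam - b) (h2 : m * lam - b < b * μ / c)
    (hA : A = lam * (2 * c * m ^ 2 + b) - m * b * (μ + 2 * c))
    (hΔ : Δ₁ = A ^ 2 + 4 * (b + c * m ^ 2) * (b * (μ + c) - m * c * lam) * (m * lam - b))
    (hu : ustar = (A + Real.sqrt Δ₁) / (2 * (b + c * m ^ 2)))
    (hv : vstar = ustar * (lam - ustar) / (b - m * (lam - ustar))) :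
    0 < ustar ∧ 0 < b - m * (lam - ustar) ∧ 0 < vstar ∧
      lam - ustar - b * vstar / (ustar + m * vstar) = 0 ∧
      μ - vstar + c * ustar / (ustar + m * vstar) = 0 := by
  have hq : 0 < b + c * m ^ 2 := by positivity
  have hK : 0 < b * (μ + c) - m * c * lam := by
    have := (lt_div_iff₀ hc).mp h2; nlinarith
  have hs : Real.sqrt Δ₁ ^ 2 =
      A ^ 2 + 4 * (b + c * m ^ 2) * ((b * (μ + c) - m * c * lam) * (m * lam - b)) := by
    rw [Real.sq_sqrt (by rw [hΔ]; positivity), hΔ]; ring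
  have hx : 2 * (b + c * m ^ 2) * ustar = A + Real.sqrt Δ₁ := by
    rw [hu]; field_simp
  have hupos : 0 < ustar := lt_larger_root hq (Real.sqrt_nonneg _) hs hx (by nlinarith)
  have hw : 0 < b - m * (lam - ustar) := by
    have hmt : m * (lam - (lam - b / m)) = b := by field_simp; ring
    have hr : 0 < lam - b / m := by rw [sub_pos, div_lt_iff₀ hm]; linarith
    have hlow : lam - b / m < ustar := lt_larger_root hq (Real.sqrt_nonneg _) hs hx (by
      rw [equilibrium_quadratic_eq hA, hmt, sub_self]
      nlinarith [mul_pos (mul_pos hb hr) (div_pos hb hm)])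
    linarith [(lt_div_iff₀' hm).mp (sub_lt_comm.mp hlow)]
  have hlt : ustar < lam := larger_root_lt hq hs hx
    (by rw [equilibrium_quadratic_eq hA]; ring_nf; positivity)
    (by rw [hA]; nlinarith [mul_pos hb hlam, mul_pos (mul_pos hm hb) hμ, mul_pos (mul_pos hm hb) hc])
  have hroot := larger_root_isRoot hq.ne' hs hx
  rw [equilibrium_quadratic_eq hA] at hroot
  exact ⟨hupos, hw, hv ▸ div_pos (mul_pos hupos (sub_pos.mpr hlt)) hw,
    prey_eq_zero hb.ne' hupos.ne' hw.ne' hv, predator_eq_zero hb.ne' hupos.ne' hw.ne' hv hroot⟩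
end

section
/- Let b, c, m, μ, λ be positive real numbers with 0 < mλ − b < bμ/c. Define A = λ(2cm² + b) − mb(μ + 2c), Δ₁ = A² + 4(b + cm²)[b(μ + c) − mcλ](mλ − b), and u* = (A + √Δ₁)/(2(b + cm²)). Then λ − b/m < u* < λ. -/
/-- bounds on the prey component of the positive equilibrium. -/
theorem stmt_1 (b c m μ lam A Δ₁ ustar : ℝ)
    (hb : 0 < b) (hc : 0 < c) (hm : 0 < m) (hμ : 0 < μ) (hlam : 0 < lam)
    (h1 : 0 < m * lam - b) (h2 : m * lam - b < b * μ / c)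
    (hA : A = lam * (2 * c * m ^ 2 + b) - m * b * (μ + 2 * c))
    (hΔ : Δ₁ = A ^ 2 + 4 * (b + c * m ^ 2) * (b * (μ + c) - m * c * lam) * (m * lam - b))
    (hu : ustar = (A + Real.sqrt Δ₁) / (2 * (b + c * m ^ 2))) :
    lam - b / m < ustar ∧ ustar < lam := by
  have hD : 0 < b + c * m ^ 2 := by positivity
  have h2' : c * (m * lam - b) < b * μ := by
    rw [lt_div_iff₀ hc] at h2; linarith
  have hK : 0 < b * (μ + c) - m * c * lam := by nlinarith
  have hΔpos : 0 < Δ₁ := by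
    rw [hΔ]
    have := mul_pos (mul_pos (by positivity : (0:ℝ) < 4 * (b + c * m ^ 2)) hK) h1
    nlinarith [sq_nonneg A]
  have hRpos : 0 < 2 * (b + c * m ^ 2) * lam - A := by
    rw [hA]; nlinarith [mul_pos hb hlam, mul_pos hm (mul_pos hb hμ),
      mul_pos (mul_pos hm hb) hc]
  have hR : Real.sqrt Δ₁ < 2 * (b + c * m ^ 2) * lam - A := by
    rw [Real.sqrt_lt' hRpos]
    have key : (2 * (b + c * m ^ 2) * lam - A) ^ 2 - Δ₁
        = 4 * (b + c * m ^ 2) * (b ^ 2 * (μ + c)) := by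
      rw [hΔ, hA]; ring
    nlinarith [mul_pos hD (by positivity : (0:ℝ) < b ^ 2 * (μ + c))]
  have hL : |2 * (b + c * m ^ 2) * (lam - b / m) - A| < Real.sqrt Δ₁ := by
    rw [Real.lt_sqrt (abs_nonneg _), sq_abs]
    have hm' : m ≠ 0 := ne_of_gt hm
    have key : Δ₁ - (2 * (b + c * m ^ 2) * (lam - b / m) - A) ^ 2
        = 4 * (b + c * m ^ 2) * b ^ 2 * (m * lam - b) / m ^ 2 := by
      rw [hΔ, hA]; field_simp; ring
    have hpos : 0 < 4 * (b + c * m ^ 2) * b ^ 2 * (m * lam - b) / m ^ 2 := by positivity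
    linarith
  have hL' := (abs_lt.mp hL).2
  constructor
  · rw [hu, lt_div_iff₀ (by linarith)]
    nlinarith
  · rw [hu, div_lt_iff₀ (by linarith)]
    nlinarith
end

section
/- Let b, c, m, μ, λ be positive real numbers. Suppose u > 0 and v > 0 satisfy λ − u − bv/(u + mv) = 0 and μ − v + cu/(u + mv) = 0. Then 0 < λ − u < b/m (so b − m(λ − u) > 0), v = u(λ − u)/(b − m(λ − u)), and u satisfies the quadratic equation (b + cm²)u² − [λ(2cm² + b) − mb(μ + 2c)]u − [b(μ + c) − mcλ](mλ − b) = 0. -/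
/-- reduction of the positive equilibrium system to a quadratic in u. -/
theorem stmt_2 (b c m μ lam u v : ℝ)
    (hb : 0 < b) (hc : 0 < c) (hm : 0 < m) (hμ : 0 < μ) (hlam : 0 < lam)
    (hu : 0 < u) (hv : 0 < v)
    (e1 : lam - u - b * v / (u + m * v) = 0)
    (e2 : μ - v + c * u / (u + m * v) = 0) :
    0 < lam - u ∧ lam - u < b / m ∧ 0 < b - m * (lam - u) ∧
      v = u * (lam - u) / (b - m * (lam - u)) ∧
      (b + c * m ^ 2) * u ^ 2 - (lam * (2 * c * m ^ 2 + b) - m * b * (μ + 2 * c)) * u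
        - (b * (μ + c) - m * c * lam) * (m * lam - b) = 0 := by
  have hS : 0 < u + m * v := by positivity
  have E1 : (lam - u) * (u + m * v) = b * v := by
    field_simp at e1; linarith
  have E2 : (v - μ) * (u + m * v) = c * u := by
    field_simp at e2; linarith
  have h1 : 0 < lam - u := by
    rcases lt_trichotomy (lam - u) 0 with h | h | h
    · nlinarith
    · nlinarith
    · exact h
  have h2 : lam - u < b / m := by
    rw [lt_div_iff₀ hm]
    nlinarith
  have h3 : 0 < b - m * (lam - u) := by nlinarith [(lt_div_iff₀ hm).mp h2]
  have P : v * (b - m * (lam - u)) = u * (lam - u) := by linarith [E1]; 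
  have hveq : v = u * (lam - u) / (b - m * (lam - u)) := by
    rw [eq_div_iff h3.ne']; linarith [P]
  refine ⟨h1, h2, h3, hveq, ?_⟩
  have key : u * ((b + c * m ^ 2) * u ^ 2 - (lam * (2 * c * m ^ 2 + b) - m * b * (μ + 2 * c)) * u
      - (b * (μ + c) - m * c * lam) * (m * lam - b)) = u * 0 := by
    linear_combination (-(b - m * (lam - u)) ^ 2) * E2 +
      (u * b - m * μ * (b - m * (lam - u)) + m * v * (b - m * (lam - u))) * P
  exact mul_left_cancel₀ hu.ne' key
end

section
/- Let h₀ > 0, λ > 0 with λ < (π/(2h₀))², let α = γ = (1/2)[(π/2)² h₀⁻² − λ], let δ > 0 satisfy (π/2)²(1 + δ)⁻² h₀⁻² − λ = α, and let C > 0. Define σ(t) = h₀(1 + δ − (δ/2)e^{−γt}) and w(t,x) = C e^{−αt} cos(πx/(2σ(t))). Then for all t > 0 and all x with 0 ≤ x < σ(t), one has ∂_t w(t,x) − ∂_{xx} w(t,x) ≥ w(t,x)(λ − w(t,x)). -/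
open Real

set_option maxHeartbeats 1000000

/-- interior supersolution inequality for the explicit function
w(t,x) = C e^{−αt} cos(πx/(2σ(t))). -/
theorem stmt_14 (h₀ lam α γ δ C : ℝ)
    (hh : 0 < h₀) (hlam : 0 < lam) (hsmall : lam < (π / (2 * h₀)) ^ 2)
    (hα : α = (1 / 2) * ((π / 2) ^ 2 * (h₀ ^ 2)⁻¹ - lam)) (hγ : γ = α)
    (hδ : 0 < δ)
    (hδeq : (π / 2) ^ 2 * ((1 + δ) ^ 2)⁻¹ * (h₀ ^ 2)⁻¹ - lam = α)
    (hC : 0 < C)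
    (σ : ℝ → ℝ) (hσ : σ = fun t : ℝ => h₀ * (1 + δ - δ / 2 * Real.exp (-γ * t)))
    (w : ℝ → ℝ → ℝ)
    (hw : w = fun t x : ℝ => C * Real.exp (-α * t) * Real.cos (π * x / (2 * σ t))) :
    ∀ t : ℝ, 0 < t → ∀ x : ℝ, 0 ≤ x → x < σ t →
      deriv (fun s : ℝ => w s x) t - deriv (deriv (fun y : ℝ => w t y)) x
        ≥ w t x * (lam - w t x) := by
  subst hw
  rw [hγ] at hσ
  subst hσ
  intro t ht x hx0 hxs
  dsimp only at hxs ⊢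
  -- basic positivity
  have hα0 : 0 < α := by
    have h1 : (π / (2 * h₀)) ^ 2 = (π / 2) ^ 2 * (h₀ ^ 2)⁻¹ := by
      field_simp
    rw [h1] at hsmall
    rw [hα]; linarith
  have hE0 : 0 < Real.exp (-α * t) := Real.exp_pos _
  have hE1 : Real.exp (-α * t) < 1 := by
    rw [Real.exp_lt_one_iff]; nlinarith
  set E := Real.exp (-α * t) with hE
  set st := h₀ * (1 + δ - δ / 2 * E) with hstdef
  have hst0 : 0 < st := by nlinarith
  have hstub : st ≤ h₀ * (1 + δ) := by
    rw [hstdef]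
    nlinarith [mul_pos hh (mul_pos (half_pos hδ) hE0)]
  have hθ0 : 0 ≤ π * x / (2 * st) := by positivity
  have hθlt : π * x / (2 * st) < π / 2 := by
    rw [div_lt_div_iff₀ (by positivity) two_pos]
    nlinarith [pi_pos, mul_pos pi_pos (sub_pos.mpr hxs)]
  set θ := π * x / (2 * st) with hθ
  have hcos : 0 < Real.cos θ := by
    apply Real.cos_pos_of_mem_Ioo
    constructor
    · linarith [pi_pos]
    · exact hθlt
  have hsin : 0 ≤ Real.sin θ := by
    apply Real.sin_nonneg_of_nonneg_of_le_pi hθ0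
    linarith [pi_pos]
  -- t-derivative
  have h1 : HasDerivAt (fun s : ℝ => -α * s) (-α) t := by
    simpa using (hasDerivAt_id t).const_mul (-α)
  have h2 : HasDerivAt (fun s : ℝ => Real.exp (-α * s)) (Real.exp (-α * t) * (-α)) t := h1.exp
  have hσd : HasDerivAt (fun s : ℝ => h₀ * (1 + δ - δ / 2 * Real.exp (-α * s)))
      (h₀ * -(δ / 2 * (Real.exp (-α * t) * (-α)))) t :=
    ((h2.const_mul (δ / 2)).const_sub (1 + δ)).const_mul h₀
  set σd := h₀ * -(δ / 2 * (Real.exp (-α * t) * (-α))) with hσddef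
  have h2σ : HasDerivAt (fun s : ℝ => 2 * (h₀ * (1 + δ - δ / 2 * Real.exp (-α * s)))) (2 * σd) t :=
    hσd.const_mul 2
  have hgd : HasDerivAt (fun s : ℝ => π * x / (2 * (h₀ * (1 + δ - δ / 2 * Real.exp (-α * s)))))
      ((0 * (2 * st) - π * x * (2 * σd)) / (2 * st) ^ 2) t := by
    exact (hasDerivAt_const t (π * x)).div h2σ (by positivity)
  set gd := (0 * (2 * st) - π * x * (2 * σd)) / (2 * st) ^ 2 with hgddef
  have hwt : HasDerivAt (fun s : ℝ => C * Real.exp (-α * s) *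
      Real.cos (π * x / (2 * (h₀ * (1 + δ - δ / 2 * Real.exp (-α * s))))))
      (C * (E * (-α)) * Real.cos θ + C * E * (-Real.sin θ * gd)) t :=
    (h2.const_mul C).mul hgd.cos
  -- x-derivatives
  have hfirst : deriv (fun y : ℝ => C * E * Real.cos (π * y / (2 * st)))
      = fun y : ℝ => C * E * (-Real.sin (π * y / (2 * st)) * (π / (2 * st))) := by
    funext y
    have hin : HasDerivAt (fun y : ℝ => π * y / (2 * st)) (π / (2 * st)) y := by
      simpa using ((hasDerivAt_id y).const_mul π).div_const (2 * st)
    exact (hin.cos.const_mul (C * E)).deriv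
  have hin : HasDerivAt (fun y : ℝ => π * y / (2 * st)) (π / (2 * st)) x := by
    simpa using ((hasDerivAt_id x).const_mul π).div_const (2 * st)
  have hsecond : HasDerivAt (fun y : ℝ => C * E * (-Real.sin (π * y / (2 * st)) * (π / (2 * st))))
      (C * E * (-(Real.cos θ * (π / (2 * st))) * (π / (2 * st)))) x :=
    ((hin.sin.neg).mul_const (π / (2 * st))).const_mul (C * E)
  clear_value gd σd θ st E
  rw [hwt.deriv, hfirst, hsecond.deriv]
  -- the inequality
  have hσd0 : 0 ≤ σd := by
    have h6 : σd = h₀ * (δ / 2) * Real.exp (-α * t) * α := by rw [hσddef]; ring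
    rw [h6]; positivity
  have hgd0 : gd ≤ 0 := by
    rw [hgddef]
    apply div_nonpos_of_nonpos_of_nonneg
    · nlinarith [mul_nonneg (mul_nonneg pi_pos.le hx0) hσd0]
    · positivity
  have hP : 0 ≤ C * E * (-Real.sin θ * gd) := by
    have h7 : C * E * (-Real.sin θ * gd) = C * E * Real.sin θ * (-gd) := by ring
    rw [h7]
    exact mul_nonneg (mul_nonneg (by positivity) hsin) (by linarith)
  have hA : 0 < h₀ * (1 + δ) := by positivity
  have hal : α + lam = (π / 2) ^ 2 * ((1 + δ) ^ 2)⁻¹ * (h₀ ^ 2)⁻¹ := by linarith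
  have he : (α + lam) * (4 * (h₀ * (1 + δ)) ^ 2) = π ^ 2 := by
    rw [hal]
    field_simp
    ring
  have h5 : (α + lam) * (4 * st ^ 2) ≤ (α + lam) * (4 * (h₀ * (1 + δ)) ^ 2) := by
    apply mul_le_mul_of_nonneg_left _ (by linarith)
    have h9 : st ^ 2 ≤ (h₀ * (1 + δ)) ^ 2 := pow_le_pow_left₀ hst0.le hstub 2
    linarith
  have hk2 : α + lam ≤ (π / (2 * st)) ^ 2 := by
    rw [div_pow, le_div_iff₀ (by positivity)]
    linarith [he, h5]
  have hkey : 0 ≤ C * E * Real.cos θ * ((π / (2 * st)) ^ 2 - α - lam + C * E * Real.cos θ) := by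
    apply mul_nonneg (by positivity)
    have h8 : 0 < C * E * Real.cos θ := mul_pos (mul_pos hC hE0) hcos
    linarith
  have hsplit : C * (E * (-α)) * Real.cos θ + C * E * (-Real.sin θ * gd)
      - C * E * (-(Real.cos θ * (π / (2 * st))) * (π / (2 * st)))
      - C * E * Real.cos θ * (lam - C * E * Real.cos θ)
      = C * E * Real.cos θ * ((π / (2 * st)) ^ 2 - α - lam + C * E * Real.cos θ)
        + C * E * (-Real.sin θ * gd) := by ring
  rw [ge_iff_le, ← sub_nonneg]
  linarith [hkey, hP, hsplit]
end

section
/- Let h₀ > 0, λ > 0 with λ < (π/(2h₀))², let α = γ = (1/2)[(π/2)² h₀⁻² − λ], let δ > 0 satisfy (π/2)²(1 + δ)⁻² h₀⁻² − λ = α, and let C > 0. Define σ(t) = h₀(1 + δ − (δ/2)e^{−γt}) and w(t,x) = C e^{−αt} cos(πx/(2σ(t))). Then ∂_x w(t, σ(t)) = −C e^{−αt} π/(2σ(t)), and for every ρ with 0 < ρ ≤ δγh₀²/(Cπ) one has σ'(t) ≥ −ρ ∂_x w(t, σ(t)) for all t ≥ 0. -/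
/-!
The boundary value of `∂ₓ w` comes from `sin (π/2) = 1`. For the inequality, `σ ≥ h₀`
for `t ≥ 0` and `γ = α`, so `σ' = (δγh₀/2) e^{-αt}` while
`-ρ ∂ₓ w(t, σ) = ρ C π e^{-αt} / (2σ) ≤ δγh₀² e^{-αt} / (2h₀)`.
-/

open Real

/-- Holds for every `c`: at `c = 0` both sides are `0` because `x / 0 = 0`. -/
lemma deriv_mul_cos_pi_mul_div_two_mul_self (a c : ℝ) :
    deriv (fun y => a * cos (π * y / (2 * c))) c = -(a * π / (2 * c)) := by
  rcases eq_or_ne c 0 with rfl | hc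
  · simp
  · have hlin : HasDerivAt (fun y => π * y / (2 * c)) (π / (2 * c)) c := by
      simpa using ((hasDerivAt_id c).const_mul π).div_const (2 * c)
    have harg : π * c / (2 * c) = π / 2 := by field_simp
    rw [(hlin.cos.const_mul a).deriv, harg, sin_pi_div_two]
    ring

lemma hasDerivAt_sub_mul_exp_neg_mul (a b γ t : ℝ) :
    HasDerivAt (fun s => a - b * exp (-γ * s)) (b * γ * exp (-γ * t)) t := by
  have hexp : HasDerivAt (fun s => exp (-γ * s)) (exp (-γ * t) * -γ) t := by
    simpa using ((hasDerivAt_id t).const_mul (-γ)).exp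
  exact ((hexp.const_mul b).const_sub a).congr_deriv (by ring)

lemma le_mul_one_add_sub_half_mul_exp {h₀ δ γ t : ℝ} (hh : 0 ≤ h₀) (hδ : 0 ≤ δ) (hγ : 0 ≤ γ)
    (ht : 0 ≤ t) : h₀ ≤ h₀ * (1 + δ - δ / 2 * exp (-γ * t)) := by
  have hexp : exp (-γ * t) ≤ 1 := exp_le_one_iff.mpr (by nlinarith)
  have : 1 ≤ 1 + δ - δ / 2 * exp (-γ * t) := by nlinarith
  nlinarith

lemma mul_div_le_of_le_div {ρ C h₀ s δ γ E : ℝ} (hC : 0 < C) (hh : 0 < h₀) (hs : h₀ ≤ s)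
    (hδγ : 0 ≤ δ * γ) (hE : 0 ≤ E) (hρ : ρ ≤ δ * γ * h₀ ^ 2 / (C * π)) :
    ρ * (C * E * π / (2 * s)) ≤ h₀ * (δ / 2 * γ * E) := by
  have hρ' : ρ * (C * π) ≤ δ * γ * h₀ ^ 2 := (le_div_iff₀ (by positivity)).mp hρ
  have hs0 : 0 < s := hh.trans_le hs
  rw [show ρ * (C * E * π / (2 * s)) = ρ * (C * π) * E / (2 * s) by ring,
    div_le_iff₀ (by positivity)]
  calc ρ * (C * π) * E ≤ δ * γ * h₀ ^ 2 * E := by gcongr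
    _ = δ * γ * E * h₀ * h₀ := by ring
    _ ≤ δ * γ * E * h₀ * s := by gcongr
    _ = h₀ * (δ / 2 * γ * E) * (2 * s) := by ring

theorem stmt_15_general (h₀ lam α γ δ C : ℝ)
    (hh : 0 < h₀) (hsmall : lam < (π / (2 * h₀)) ^ 2)
    (hα : α = (1 / 2) * ((π / 2) ^ 2 * (h₀ ^ 2)⁻¹ - lam)) (hγ : γ = α)
    (hδ : 0 < δ)
    (hC : 0 < C)
    (σ : ℝ → ℝ) (hσ : σ = fun t : ℝ => h₀ * (1 + δ - δ / 2 * Real.exp (-γ * t)))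
    (w : ℝ → ℝ → ℝ)
    (hw : w = fun t x : ℝ => C * Real.exp (-α * t) * Real.cos (π * x / (2 * σ t))) :
    (∀ t : ℝ, deriv (fun y : ℝ => w t y) (σ t)
        = -(C * Real.exp (-α * t) * π / (2 * σ t))) ∧
      ∀ ρ : ℝ, 0 < ρ → ρ ≤ δ * γ * h₀ ^ 2 / (C * π) →
        ∀ t : ℝ, 0 ≤ t → deriv σ t ≥ -ρ * deriv (fun y : ℝ => w t y) (σ t) := by
  have hα0 : 0 < α := by
    have : (π / (2 * h₀)) ^ 2 = (π / 2) ^ 2 * (h₀ ^ 2)⁻¹ := by ring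
    linarith
  subst hw hγ
  refine ⟨fun t => deriv_mul_cos_pi_mul_div_two_mul_self _ _, fun ρ _ hρ t ht => ?_⟩
  have hσ' : HasDerivAt σ (h₀ * (δ / 2 * γ * exp (-γ * t))) t := by
    subst hσ
    exact (hasDerivAt_sub_mul_exp_neg_mul (1 + δ) (δ / 2) γ t).const_mul h₀
  have hσge : h₀ ≤ σ t := hσ ▸ le_mul_one_add_sub_half_mul_exp hh.le hδ.le hα0.le ht
  rw [hσ'.deriv, deriv_mul_cos_pi_mul_div_two_mul_self, ge_iff_le, neg_mul_neg]
  exact mul_div_le_of_le_div hC hh hσge (by positivity) (exp_pos _).le hρ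

/-- free-boundary inequality for the explicit supersolution (w, σ). -/
theorem stmt_15 (h₀ lam α γ δ C : ℝ)
    (hh : 0 < h₀) (hlam : 0 < lam) (hsmall : lam < (π / (2 * h₀)) ^ 2)
    (hα : α = (1 / 2) * ((π / 2) ^ 2 * (h₀ ^ 2)⁻¹ - lam)) (hγ : γ = α)
    (hδ : 0 < δ)
    (hδeq : (π / 2) ^ 2 * ((1 + δ) ^ 2)⁻¹ * (h₀ ^ 2)⁻¹ - lam = α)
    (hC : 0 < C)
    (σ : ℝ → ℝ) (hσ : σ = fun t : ℝ => h₀ * (1 + δ - δ / 2 * Real.exp (-γ * t)))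
    (w : ℝ → ℝ → ℝ)
    (hw : w = fun t x : ℝ => C * Real.exp (-α * t) * Real.cos (π * x / (2 * σ t))) :
    (∀ t : ℝ, deriv (fun y : ℝ => w t y) (σ t)
        = -(C * Real.exp (-α * t) * π / (2 * σ t))) ∧
      ∀ ρ : ℝ, 0 < ρ → ρ ≤ δ * γ * h₀ ^ 2 / (C * π) →
        ∀ t : ℝ, 0 ≤ t → deriv σ t ≥ -ρ * deriv (fun y : ℝ => w t y) (σ t) :=
  stmt_15_general h₀ lam α γ δ C hh hsmall hα hγ hδ hC σ hσ w hw
end
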